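/- Suppose h(x) = 0 for x < c where c ∈ (0,1) (threshold feedback). If P^eq is an equilibrium of the master equation such that P^eq_{ij} < c for all pairs i ≠ j with i in S and j not in S, for some nonempty proper subset S of {1,…,N}, then the restricted configurations on S and on its complement each separately satisfy the equilibrium equations of the master equation restricted to those vertex sets. -/
import Mathlib


open Finset

/-- The master-equation vector field coordinate restricted to the vertex set `K`:
`F^K_{ij}(P) = Σ_{k∈K} (M_{ki}h(P_{ki})P_{kj} + M_{kj}h(P_{kj})P_{ki})
  − P_{ij}(Σ_{k∈K} (M_{ki}h(P_{ki}) + M_{kj}h(P_{kj})) + 2μ)`. -/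
def restrictedField {N : ℕ} (μ : ℝ) (M : Fin N → Fin N → ℝ) (h : ℝ → ℝ)
    (K : Finset (Fin N)) (i j : Fin N) (P : Fin N → Fin N → ℝ) : ℝ :=
  (∑ k ∈ K, (M k i * h (P k i) * P k j + M k j * h (P k j) * P k i))
    - P i j * ((∑ k ∈ K, (M k i * h (P k i) + M k j * h (P k j))) + 2 * μ)

lemma restrictedField_eq_univ {N : ℕ} (μ : ℝ) (M : Fin N → Fin N → ℝ) (h : ℝ → ℝ)
    (K : Finset (Fin N)) (i j : Fin N) (P : Fin N → Fin N → ℝ)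
    (hz : ∀ k, k ∉ K → h (P k i) = 0 ∧ h (P k j) = 0) :
    restrictedField μ M h K i j P = restrictedField μ M h univ i j P := by
  unfold restrictedField
  have h1 : ∑ k ∈ K, (M k i * h (P k i) * P k j + M k j * h (P k j) * P k i)
      = ∑ k ∈ univ, (M k i * h (P k i) * P k j + M k j * h (P k j) * P k i) := by
    refine Finset.sum_subset (subset_univ K) ?_
    intro k _ hk
    rw [(hz k hk).1, (hz k hk).2]; ring
  have h2 : ∑ k ∈ K, (M k i * h (P k i) + M k j * h (P k j))
      = ∑ k ∈ univ, (M k i * h (P k i) + M k j * h (P k j)) := by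
    refine Finset.sum_subset (subset_univ K) ?_
    intro k _ hk
    rw [(hz k hk).1, (hz k hk).2]; ring
  rw [h1, h2]

/-- Threshold feedback: suppose `h(x) = 0` for `x < c`, `c ∈ (0,1)`. If `P^eq` is an
equilibrium of the master equation such that `P^eq_{ij} < c` whenever `i ∈ S` and
`j ∉ S` for a nonempty proper subset `S` of the populations, then the restricted
configurations on `S` and on its complement each satisfy the equilibrium equations
of the master equation restricted to the corresponding vertex set. -/
theorem threshold_decoupling (N : ℕ) (hN : 2 ≤ N) (μ : ℝ) (hμ : 0 < μ)
    (M : Fin N → Fin N → ℝ) (hM : ∀ i j, 0 ≤ M i j)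
    (c : ℝ) (hc : c ∈ Set.Ioo (0:ℝ) 1)
    (h : ℝ → ℝ) (hrange : ∀ x ∈ Set.Icc (0:ℝ) 1, h x ∈ Set.Icc (0:ℝ) 1)
    (hthr : ∀ x : ℝ, x < c → h x = 0)
    (S : Finset (Fin N)) (hS : S.Nonempty) (hS' : Sᶜ.Nonempty)
    (P : Fin N → Fin N → ℝ)
    (heq : ∀ i j : Fin N, i ≠ j → restrictedField μ M h univ i j P = 0)
    (hcross : ∀ i ∈ S, ∀ j ∈ Sᶜ, P i j < c ∧ P j i < c) :
    (∀ i ∈ S, ∀ j ∈ S, i ≠ j → restrictedField μ M h S i j P = 0)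
    ∧ (∀ i ∈ Sᶜ, ∀ j ∈ Sᶜ, i ≠ j → restrictedField μ M h Sᶜ i j P = 0) := by
  constructor
  · intro i hi j hj hij
    rw [restrictedField_eq_univ μ M h S i j P ?_]
    · exact heq i j hij
    · intro k hk
      have hk' : k ∈ Sᶜ := by simpa using hk
      exact ⟨hthr _ (hcross i hi k hk').2, hthr _ (hcross j hj k hk').2⟩
  · intro i hi j hj hij
    rw [restrictedField_eq_univ μ M h Sᶜ i j P ?_]
    · exact heq i j hij
    · intro k hk
      have hk' : k ∈ S := by simpa using hk
      exact ⟨hthr _ (hcross k hk' i hi).1, hthr _ (hcross k hk' j hj).1⟩
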